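/- arXiv:1409.4065 — 5 statements merged into one kernel-verified Lean document; each statement's English description precedes it below -/
import Mathlib

section
/- Let a₁, a₂, a₃, a₄ be nonnegative integers with a₁ + a₂ + a₃ + a₄ even, representing points on a circle divided into four consecutive sectors A₁, A₂, A₃, A₄ by two intersecting lines. Let C be a perfect matching of these points realizable by disjoint chords (a noncrossing perfect matching respecting the circular order). If no chord of C connects a point of sector A₂ with a point of sector A₄, then the total number of intersections of chords of C with the two lines is at most a₁ + a₃. -/
/-- `f` is a noncrossing perfect matching of the `P` points `0, 1, ..., P-1`
(in circular order): a fixed-point-free involution of the points whose chords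
are pairwise noncrossing (no interleaving pattern `p < q < f p < f q`). -/
def IsNCMatching (P : ℕ) (f : ℕ → ℕ) : Prop :=
  (∀ p, p < P → f p < P) ∧ (∀ p, p < P → f (f p) = p) ∧ (∀ p, p < P → f p ≠ p) ∧
  (∀ p q, p < P → q < P → ¬ (p < q ∧ q < f p ∧ f p < f q))

/-- The sector (1, 2, 3 or 4) containing point `p`, when the `a₁+a₂+a₃+a₄` points
are grouped into four consecutive arcs of sizes `a₁, a₂, a₃, a₄`. -/
def sector (a1 a2 a3 a4 p : ℕ) : ℕ :=
  if p < a1 then 1 else if p < a1 + a2 then 2 else if p < a1 + a2 + a3 then 3 else 4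

/-- The number of intersections of the chord `{p, q}` with the pair of separating
lines: `0` if `p, q` are in the same sector, `2` if they are in opposite sectors
(`{1,3}` or `{2,4}`), and `1` if they are in adjacent sectors. -/
def chordCross (a1 a2 a3 a4 p q : ℕ) : ℕ :=
  if sector a1 a2 a3 a4 p = sector a1 a2 a3 a4 q then 0
  else if (sector a1 a2 a3 a4 p = 1 ∧ sector a1 a2 a3 a4 q = 3) ∨
          (sector a1 a2 a3 a4 p = 3 ∧ sector a1 a2 a3 a4 q = 1) ∨
          (sector a1 a2 a3 a4 p = 2 ∧ sector a1 a2 a3 a4 q = 4) ∨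
          (sector a1 a2 a3 a4 p = 4 ∧ sector a1 a2 a3 a4 q = 2) then 2
  else 1

/-- `m(C)`: the total number of intersections of the chords of the matching `f`
with the pair of lines (summing over each chord once). -/
def totalCross (a1 a2 a3 a4 : ℕ) (f : ℕ → ℕ) : ℕ :=
  ∑ p ∈ (Finset.range (a1 + a2 + a3 + a4)).filter (fun p => p < f p),
    chordCross a1 a2 a3 a4 p (f p)

private def cc (s t : ℕ) : ℕ :=
  if s = t then 0
  else if (s = 1 ∧ t = 3) ∨ (s = 3 ∧ t = 1) ∨ (s = 2 ∧ t = 4) ∨ (s = 4 ∧ t = 2) then 2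
  else 1

private def gg (s : ℕ) : ℕ := if s = 1 ∨ s = 3 then 1 else 0

private lemma cc_le : ∀ s < 5, ∀ t < 5, 1 ≤ s → 1 ≤ t →
    ¬(s = 2 ∧ t = 4) → ¬(s = 4 ∧ t = 2) → cc s t ≤ gg s + gg t := by
  intro s hs t ht h1s h1t
  interval_cases s <;> interval_cases t <;> simp [cc, gg]

private lemma sector_bounds (a1 a2 a3 a4 p : ℕ) :
    1 ≤ sector a1 a2 a3 a4 p ∧ sector a1 a2 a3 a4 p < 5 := by
  unfold sector; split_ifs <;> omega

private lemma chordCross_eq_cc (a1 a2 a3 a4 p q : ℕ) :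
    chordCross a1 a2 a3 a4 p q = cc (sector a1 a2 a3 a4 p) (sector a1 a2 a3 a4 q) := rfl

/-- If no chord of the noncrossing perfect matching `C` connects a point of sector
`A₂` with a point of sector `A₄`, then the total number of intersections of the
chords of `C` with the two lines is at most `a₁ + a₃`. -/
theorem totalCross_le_of_no_two_four (a1 a2 a3 a4 : ℕ)
    (heven : Even (a1 + a2 + a3 + a4)) (f : ℕ → ℕ)
    (hC : IsNCMatching (a1 + a2 + a3 + a4) f)
    (hno : ∀ p, p < a1 + a2 + a3 + a4 →
      ¬ (sector a1 a2 a3 a4 p = 2 ∧ sector a1 a2 a3 a4 (f p) = 4)) :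
    totalCross a1 a2 a3 a4 f ≤ a1 + a3 := by
  classical
  obtain ⟨hf1, hf2, hf3, -⟩ := hC
  set P := a1 + a2 + a3 + a4 with hP
  set g : ℕ → ℕ := fun p => gg (sector a1 a2 a3 a4 p) with hg
  set S := (Finset.range P).filter (fun p => p < f p) with hS
  set T := (Finset.range P).filter (fun p => f p < p) with hT
  have step1 : totalCross a1 a2 a3 a4 f ≤ ∑ p ∈ S, (g p + g (f p)) := by
    apply Finset.sum_le_sum
    intro p hp
    simp only [hS, Finset.mem_filter, Finset.mem_range] at hp
    have h1 := hno p hp.1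
    have h2 := hno (f p) (hf1 p hp.1)
    rw [hf2 p hp.1] at h2
    rw [chordCross_eq_cc]
    exact cc_le _ (sector_bounds a1 a2 a3 a4 p).2 _ (sector_bounds a1 a2 a3 a4 (f p)).2
      (sector_bounds a1 a2 a3 a4 p).1 (sector_bounds a1 a2 a3 a4 (f p)).1 h1
      (fun h => h2 ⟨h.2, h.1⟩)
  have step2 : ∑ p ∈ S, (g p + g (f p)) = ∑ p ∈ S, g p + ∑ p ∈ T, g p := by
    rw [Finset.sum_add_distrib]
    congr 1
    apply Finset.sum_nbij' (i := f) (j := f)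
    · intro p hp
      simp only [hS, Finset.mem_filter, Finset.mem_range] at hp
      simp only [hT, Finset.mem_filter, Finset.mem_range]
      exact ⟨hf1 p hp.1, by rw [hf2 p hp.1]; exact hp.2⟩
    · intro p hp
      simp only [hT, Finset.mem_filter, Finset.mem_range] at hp
      simp only [hS, Finset.mem_filter, Finset.mem_range]
      exact ⟨hf1 p hp.1, by rw [hf2 p hp.1]; exact hp.2⟩
    · intro p hp
      simp only [hS, Finset.mem_filter, Finset.mem_range] at hp
      exact hf2 p hp.1
    · intro p hp
      simp only [hT, Finset.mem_filter, Finset.mem_range] at hp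
      exact hf2 p hp.1
    · intro p hp; rfl
  have step3 : ∑ p ∈ S, g p + ∑ p ∈ T, g p = ∑ p ∈ Finset.range P, g p := by
    rw [← Finset.sum_filter_add_sum_filter_not (Finset.range P) (fun p => p < f p)]
    congr 1
    apply Finset.sum_congr _ (fun _ _ => rfl)
    ext p
    simp only [hT, Finset.mem_filter, Finset.mem_range]
    constructor
    · rintro ⟨hpP, hlt⟩; exact ⟨hpP, by omega⟩
    · rintro ⟨hpP, hnlt⟩
      exact ⟨hpP, lt_of_le_of_ne (not_lt.mp hnlt) (hf3 p hpP)⟩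
  have step4 : ∑ p ∈ Finset.range P, g p = a1 + a3 := by
    have hsplit : ∀ p, g p =
        (if p < a1 then 1 else 0) + (if a1 + a2 ≤ p ∧ p < a1 + a2 + a3 then 1 else 0) := by
      intro p
      simp only [hg, gg, sector]
      split_ifs <;> omega
    rw [Finset.sum_congr rfl (fun p _ => hsplit p), Finset.sum_add_distrib]
    have e1 : ∑ p ∈ Finset.range P, (if p < a1 then 1 else 0) = a1 := by
      rw [← Finset.card_filter]
      have : (Finset.range P).filter (fun p => p < a1) = Finset.range a1 := by
        ext p
        simp only [Finset.mem_filter, Finset.mem_range, hP]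
        omega
      rw [this, Finset.card_range]
    have e2 : ∑ p ∈ Finset.range P,
        (if a1 + a2 ≤ p ∧ p < a1 + a2 + a3 then 1 else 0) = a3 := by
      rw [← Finset.card_filter]
      have : (Finset.range P).filter (fun p => a1 + a2 ≤ p ∧ p < a1 + a2 + a3)
          = Finset.Ico (a1 + a2) (a1 + a2 + a3) := by
        ext p
        simp only [Finset.mem_filter, Finset.mem_range, Finset.mem_Ico, hP]
        omega
      rw [this, Nat.card_Ico]
      omega
    rw [e1, e2]
  omega
end

section
/- Let m, n ≥ 0. The number of Dyck paths of semilength m+n (paths from (0,0) to (m+n, m+n) never passing below y = x) whose height S_j (number of up-steps minus number of right-steps among the first j steps) satisfies S_j ≤ n+1 for all j, equals Σ_{k∈ℤ} [C(2m+2n, m+n - k(n+3))₊ - C(2m+2n, m+n + k(n+3) + 1)₊], where C(y,z)₊ is the binomial coefficient when y ≥ z ≥ 0 and 0 otherwise. -/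
/-!
Let `A(j, u)` count the `j`-step paths with `u` up-steps whose height stays in `[0, B]`
(here `B = n + 1`). Inside the strip `j ≤ 2u ≤ j + B` it obeys Pascal's rule
`A(j+1, u) = A(j, u-1) + A(j, u)`, and it vanishes just outside. The reflection sum
`G(j, u) = Σ_k [C(j, u + kP) - C(j, u + 1 + kP)]` with `P = B + 2` obeys Pascal's rule everywhere;
the symmetry `C(j, t) = C(j, j - t)` makes it vanish on the line `j = 2u + 1`, and the same symmetry
combined with `P`-periodicity in `u` makes it vanish on `2u = j + B + 1`. As `A` and `G` agree at
`j = 0`, they agree on the whole strip, and `G(2(m+n), m+n)` is the stated sum after `k ↦ -k`.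
-/

/-- Binomial coefficient `C(n, k)` with integer lower index, taken to be `0`
when the lower index is negative or exceeds the upper index. -/
def chooseZ (n : ℕ) (k : ℤ) : ℤ :=
  if 0 ≤ k ∧ k ≤ (n : ℤ) then (n.choose k.toNat : ℤ) else 0

/-- The number of up-steps among the first `j` steps of the lattice path `p`
(`true` = up-step `(0,1)`, `false` = right-step `(1,0)`); after `j` steps the
path is at the point `(j - ups p j, ups p j)`. -/
def ups {len : ℕ} (p : Fin len → Bool) (j : ℕ) : ℕ :=
  (Finset.univ.filter (fun i : Fin len => (i : ℕ) < j ∧ p i = true)).card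

open Finset Function

lemma chooseZ_natCast (n k : ℕ) : chooseZ n k = n.choose k := by
  unfold chooseZ
  split_ifs with h
  · simp
  · rw [Nat.choose_eq_zero_of_lt (by omega), Nat.cast_zero]

lemma chooseZ_of_neg (n : ℕ) {t : ℤ} (ht : t < 0) : chooseZ n t = 0 :=
  if_neg (by omega)

lemma chooseZ_succ (n : ℕ) (t : ℤ) : chooseZ (n + 1) t = chooseZ n t + chooseZ n (t - 1) := by
  obtain ht | ht := lt_or_ge t 0
  · simp [chooseZ_of_neg, ht, show t - 1 < 0 by omega]
  lift t to ℕ using ht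
  cases t with
  | zero =>
    rw [chooseZ_natCast, chooseZ_natCast, chooseZ_of_neg n (by omega)]
    simp
  | succ k =>
    rw [show ((k + 1 : ℕ) : ℤ) - 1 = k by omega, chooseZ_natCast, chooseZ_natCast,
      chooseZ_natCast, Nat.choose_succ_succ', Nat.cast_add, add_comm]

lemma chooseZ_symm (n : ℕ) (t : ℤ) : chooseZ n (n - t) = chooseZ n t := by
  unfold chooseZ
  split_ifs with h1 h2 h2 <;> try omega
  rw [show ((n : ℤ) - t).toNat = n - t.toNat by omega, Nat.choose_symm (by omega)]

lemma chooseZ_zero (t : ℤ) : chooseZ 0 t = if t = 0 then 1 else 0 := by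
  unfold chooseZ
  by_cases ht : t = 0 <;> simp [ht]
  omega

lemma summable_chooseZ_comp (n : ℕ) {g : ℤ → ℤ} (hg : Injective g) :
    Summable fun k => chooseZ n (g k) := by
  refine summable_of_ne_finset_zero (s := (Icc 0 (n : ℤ)).preimage g hg.injOn) fun k hk => ?_
  exact if_neg (by simpa using hk)

noncomputable def periodicChooseSum (P n : ℕ) (c : ℤ) : ℤ :=
  ∑' k : ℤ, chooseZ n (c + k * P)

section

variable {P : ℕ}

lemma summable_chooseZ_add_mul (hP : 0 < P) (n : ℕ) (c : ℤ) :
    Summable fun k : ℤ => chooseZ n (c + k * P) :=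
  summable_chooseZ_comp n fun a b h => by simpa [hP.ne'] using h

lemma periodicChooseSum_succ (hP : 0 < P) (n : ℕ) (c : ℤ) :
    periodicChooseSum P (n + 1) c = periodicChooseSum P n c + periodicChooseSum P n (c - 1) := by
  simp only [periodicChooseSum, chooseZ_succ, sub_add_eq_add_sub]
  exact (summable_chooseZ_add_mul hP n c).tsum_add
    (by simpa [sub_add_eq_add_sub] using summable_chooseZ_add_mul hP n (c - 1))

lemma periodicChooseSum_add_period (n : ℕ) (c : ℤ) :
    periodicChooseSum P n (c + P) = periodicChooseSum P n c := by
  simp only [periodicChooseSum]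
  rw [← (Equiv.addRight (1 : ℤ)).tsum_eq fun k => chooseZ n (c + k * P)]
  congr! 2 with k
  rw [Equiv.coe_addRight, add_one_mul, add_assoc, add_comm (P : ℤ)]

lemma periodicChooseSum_symm (n : ℕ) (c : ℤ) :
    periodicChooseSum P n (n - c) = periodicChooseSum P n c := by
  simp only [periodicChooseSum]
  rw [← (Equiv.neg ℤ).tsum_eq]
  congr! 2 with k
  rw [← chooseZ_symm]
  congr 1
  simp only [Equiv.neg_apply]
  ring

lemma periodicChooseSum_zero {c : ℤ} (hc : |c| < P) :
    periodicChooseSum P 0 c = if c = 0 then 1 else 0 := by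
  have hroot (k : ℤ) : c + k * P = 0 ↔ k = 0 ∧ c = 0 := by
    refine ⟨fun h => ?_, fun ⟨hk, hc⟩ => by simp [hk, hc]⟩
    have hc0 : c = 0 := Int.eq_zero_of_abs_lt_dvd ⟨-k, by linarith⟩ hc
    subst hc0
    simp at h hc
    omega
  simp only [periodicChooseSum, chooseZ_zero, hroot, ite_and]
  exact tsum_ite_eq 0 _

end

noncomputable def reflectionSum (B n : ℕ) (u : ℤ) : ℤ :=
  periodicChooseSum (B + 2) n u - periodicChooseSum (B + 2) n (u + 1)

section

variable {B n : ℕ} {u : ℤ}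

lemma reflectionSum_succ :
    reflectionSum B (n + 1) u = reflectionSum B n (u - 1) + reflectionSum B n u := by
  simp only [reflectionSum, periodicChooseSum_succ (Nat.succ_pos _), add_sub_cancel_right,
    sub_add_cancel]
  ring

lemma reflectionSum_eq_zero_of_eq_two_mul_add_one (h : (n : ℤ) = 2 * u + 1) :
    reflectionSum B n u = 0 := by
  rw [reflectionSum, ← periodicChooseSum_symm n (u + 1), show (n : ℤ) - (u + 1) = u by omega,
    sub_self]

lemma reflectionSum_eq_zero_of_two_mul_eq (h : 2 * u = n + B + 1) :
    reflectionSum B n u = 0 := by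
  rw [reflectionSum, ← periodicChooseSum_symm n u, ← periodicChooseSum_add_period,
    show (n : ℤ) - u + (B + 2 : ℕ) = u + 1 by push_cast; omega, sub_self]

lemma reflectionSum_zero (h0 : 0 ≤ u) (hB : 2 * u ≤ B) :
    reflectionSum B 0 u = if u = 0 then 1 else 0 := by
  rw [reflectionSum, periodicChooseSum_zero (by rw [abs_of_nonneg h0]; push_cast; omega),
    periodicChooseSum_zero (by rw [abs_of_nonneg (by omega)]; push_cast; omega),
    if_neg (show u + 1 ≠ 0 by omega), sub_zero]

lemma reflectionSum_eq_tsum :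
    reflectionSum B n u = ∑' k : ℤ, (chooseZ n (u - k * (B + 2 : ℕ))
      - chooseZ n (u + k * (B + 2 : ℕ) + 1)) := by
  have hP : 0 < B + 2 := Nat.succ_pos _
  have hneg : ∑' k : ℤ, chooseZ n (u - k * (B + 2 : ℕ)) = periodicChooseSum (B + 2) n u := by
    rw [periodicChooseSum, ← (Equiv.neg ℤ).tsum_eq]
    simp only [Equiv.neg_apply, neg_mul, sub_neg_eq_add]
  have hshift (k : ℤ) : u + k * (B + 2 : ℕ) + 1 = u + 1 + k * (B + 2 : ℕ) := by ring
  rw [Summable.tsum_sub, hneg, reflectionSum]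
  · simp only [periodicChooseSum, hshift]
  · exact summable_chooseZ_comp n fun a b h => by simp at h; omega
  · simpa only [hshift] using summable_chooseZ_add_mul hP n (u + 1)

end

lemma ups_zero {j : ℕ} (p : Fin j → Bool) : ups p 0 = 0 := by
  simp [ups]

lemma ups_of_le {j i : ℕ} (p : Fin j → Bool) (h : j ≤ i) : ups p i = ups p j := by
  unfold ups
  congr 1
  exact filter_congr fun x _ => and_congr_left fun _ => by omega

lemma ups_snoc {j : ℕ} (p : Fin j → Bool) (b : Bool) (i : ℕ) :
    ups (Fin.snoc p b : Fin (j + 1) → Bool) i = ups p i + if j < i ∧ b then 1 else 0 := by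
  simp only [ups, card_filter, Fin.sum_univ_castSucc, Fin.snoc_castSucc, Fin.snoc_last,
    Fin.val_castSucc, Fin.val_last]

lemma ups_snoc_of_le {j i : ℕ} (p : Fin j → Bool) (b : Bool) (h : i ≤ j) :
    ups (Fin.snoc p b : Fin (j + 1) → Bool) i = ups p i := by
  simp [ups_snoc, Nat.not_lt.mpr h]

lemma ups_snoc_self {j : ℕ} (p : Fin j → Bool) (b : Bool) :
    ups (Fin.snoc p b : Fin (j + 1) → Bool) (j + 1) = ups p j + b.toNat := by
  cases b <;> simp [ups_snoc, ups_of_le p j.le_succ]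

def boundedPaths (B j u : ℕ) : Finset (Fin j → Bool) :=
  Finset.univ.filter fun p =>
    ups p j = u ∧ (∀ i ≤ j, i ≤ 2 * ups p i) ∧ ∀ i ≤ j, 2 * ups p i ≤ i + B

section boundedPaths

variable {B j u : ℕ}

lemma strip_of_mem_boundedPaths {p : Fin j → Bool} (hp : p ∈ boundedPaths B j u) :
    j ≤ 2 * u ∧ 2 * u ≤ j + B := by
  obtain ⟨rfl, hlow, hup⟩ := (mem_filter.mp hp).2
  exact ⟨hlow j le_rfl, hup j le_rfl⟩

lemma card_boundedPaths_eq_zero (h : ¬(j ≤ 2 * u ∧ 2 * u ≤ j + B)) :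
    #(boundedPaths B j u) = 0 :=
  card_eq_zero.mpr <| eq_empty_of_forall_notMem fun _ hp => h (strip_of_mem_boundedPaths hp)

lemma card_boundedPaths_zero : #(boundedPaths B 0 u) = if u = 0 then 1 else 0 := by
  simp only [boundedPaths, nonpos_iff_eq_zero, forall_eq, ups_zero]
  split_ifs with hu <;> simp [hu, eq_comm]

lemma snoc_mem_boundedPaths (h : j + 1 ≤ 2 * u ∧ 2 * u ≤ j + 1 + B) (p : Fin j → Bool)
    (b : Bool) :
    (Fin.snoc p b : Fin (j + 1) → Bool) ∈ boundedPaths B (j + 1) u ↔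
      p ∈ boundedPaths B j (u - b.toNat) := by
  have forall_le_succ {P : ℕ → Prop} : (∀ i ≤ j + 1, P i) ↔ (∀ i ≤ j, P i) ∧ P (j + 1) :=
    ⟨fun h => ⟨fun i hi => h i (by omega), h _ le_rfl⟩,
      fun ⟨h, h'⟩ i hi => (Nat.le_succ_iff.mp hi).elim (h i) (· ▸ h')⟩
  simp +contextual only [boundedPaths, mem_filter, mem_univ, true_and, forall_le_succ,
    ups_snoc_self, ups_snoc_of_le]
  have hb : b.toNat ≤ 1 := Bool.toNat_le b
  constructor
  · rintro ⟨hu, ⟨hlow, -⟩, hup, -⟩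
    exact ⟨by omega, hlow, hup⟩
  · rintro ⟨hu, hlow, hup⟩
    exact ⟨by omega, ⟨hlow, by omega⟩, hup, by omega⟩

lemma card_boundedPaths_succ (h : j + 1 ≤ 2 * u ∧ 2 * u ≤ j + 1 + B) :
    #(boundedPaths B (j + 1) u) = #(boundedPaths B j (u - 1)) + #(boundedPaths B j u) := by
  rw [← filter_univ_mem (boundedPaths B (j + 1) u), card_filter,
    ← (Fin.snocEquiv fun _ => Bool).sum_comp, Fintype.sum_prod_type, Fintype.sum_bool]
  simp only [Fin.snocEquiv, Equiv.coe_fn_mk, snoc_mem_boundedPaths h, ← card_filter,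
    filter_univ_mem]
  simp

end boundedPaths

lemma card_boundedPaths_eq_reflectionSum {B j u : ℕ} (h : j ≤ 2 * u ∧ 2 * u ≤ j + B) :
    (#(boundedPaths B j u) : ℤ) = reflectionSum B j u := by
  induction j generalizing u with
  | zero =>
    rw [card_boundedPaths_zero, reflectionSum_zero (by positivity) (by omega)]
    simp
  | succ j ih =>
    have hrec (v : ℕ) (h1 : j ≤ 2 * v + 1) (h2 : 2 * v ≤ j + B + 1) :
        (#(boundedPaths B j v) : ℤ) = reflectionSum B j v := by
      by_cases hv : j ≤ 2 * v ∧ 2 * v ≤ j + B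
      · exact ih hv
      rw [card_boundedPaths_eq_zero hv, Nat.cast_zero, eq_comm]
      obtain hlower | hupper : j = 2 * v + 1 ∨ 2 * v = j + B + 1 := by omega
      · exact reflectionSum_eq_zero_of_eq_two_mul_add_one (by omega)
      · exact reflectionSum_eq_zero_of_two_mul_eq (by omega)
    rw [card_boundedPaths_succ h, Nat.cast_add, hrec (u - 1) (by omega) (by omega),
      hrec u (by omega) (by omega), reflectionSum_succ, Nat.cast_pred (by omega)]

/-- Let `m, n ≥ 0`. The number of Dyck paths of semilength `m+n` (paths from
`(0,0)` to `(m+n, m+n)` never passing below `y = x`) whose height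
`S_j = (#ups) - (#rights)` among the first `j` steps satisfies `S_j ≤ n + 1`
for all `j`, equals
`Σ_{k ∈ ℤ} [C(2m+2n, m+n - k(n+3))₊ - C(2m+2n, m+n + k(n+3) + 1)₊]`. -/
theorem count_bounded_height_dyck_paths (m n : ℕ) :
    (((Finset.univ : Finset (Fin (2 * (m + n)) → Bool)).filter (fun p =>
        ups p (2 * (m + n)) = m + n ∧
        (∀ j ≤ 2 * (m + n), j ≤ 2 * ups p j) ∧
        ∀ j ≤ 2 * (m + n), 2 * ups p j ≤ j + (n + 1))).card : ℤ)
      = ∑' k : ℤ, (chooseZ (2 * m + 2 * n) ((m : ℤ) + n - k * (n + 3))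
          - chooseZ (2 * m + 2 * n) ((m : ℤ) + n + k * (n + 3) + 1)) := by
  rw [← boundedPaths, card_boundedPaths_eq_reflectionSum (by omega), reflectionSum_eq_tsum,
    show 2 * (m + n) = 2 * m + 2 * n by ring]
  push_cast
  ring_nf
end

section
/- For m, n ≥ 0, a noncrossing matching of the 2(m+n) boundary points of an m×n rectangle cannot simultaneously have some horizontal separating line crossed more than n times and some vertical separating line crossed more than m times. -/
/-- Number of chords of the matching `f` (on points `0, ..., P-1`) crossing a
separating line: the number of chords with exactly one endpoint in the side `S`. -/
def lineCross (P : ℕ) (S : ℕ → Prop) [DecidablePred S] (f : ℕ → ℕ) : ℕ :=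
  ((Finset.range P).filter (fun p => S p ∧ ¬ S (f p))).card

/-- Boundary points of an `m × n` rectangle, in circular order: `n` top points
`0, ..., n-1` (left to right), `m` right points `n, ..., n+m-1` (top to bottom),
`n` bottom points `n+m, ..., 2n+m-1` (right to left), and `m` left points
`2n+m, ..., 2n+2m-1` (bottom to top).  The `i`-th horizontal separating line
(`1 ≤ i ≤ m-1`) has on its upper side exactly the points satisfying `upperSide`. -/
def upperSide (m n i p : ℕ) : Prop := p < n + i ∨ 2 * n + 2 * m - i ≤ p

/-- The `j`-th vertical separating line (`1 ≤ j ≤ n-1`) has on its left side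
exactly the points satisfying `leftSide`. -/
def leftSide (m n j p : ℕ) : Prop := p < j ∨ 2 * n + m - j ≤ p

instance (m n i : ℕ) : DecidablePred (upperSide m n i) := fun p => by
  unfold upperSide; infer_instance

instance (m n j : ℕ) : DecidablePred (leftSide m n j) := fun p => by
  unfold leftSide; infer_instance

lemma auxAC (a b c d : Prop) [Decidable a] [Decidable b] [Decidable c] [Decidable d]
    (h1 : ¬(a ∧ ¬b ∧ ¬c ∧ d)) (h2 : ¬(c ∧ ¬d ∧ ¬a ∧ b)) :
    ((if a ∧ ¬c then 1 else 0) + (if b ∧ ¬d then 1 else 0)) +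
      ((if c ∧ ¬a then 1 else 0) + (if d ∧ ¬b then 1 else 0)) ≤
      (if a ↔ b then 1 else 0) + (if c ↔ d then (1:ℕ) else 0) := by
  by_cases a <;> by_cases b <;> by_cases c <;> by_cases d <;> simp_all

lemma auxBD (a b c d : Prop) [Decidable a] [Decidable b] [Decidable c] [Decidable d]
    (h1 : ¬(a ∧ b ∧ ¬c ∧ ¬d)) (h2 : ¬(c ∧ d ∧ ¬a ∧ ¬b)) :
    ((if a ∧ ¬c then 1 else 0) + (if b ∧ ¬d then 1 else 0)) +
      ((if c ∧ ¬a then 1 else 0) + (if d ∧ ¬b then 1 else 0)) ≤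
      (if ¬(a ↔ b) then 1 else 0) + (if ¬(c ↔ d) then (1:ℕ) else 0) := by
  by_cases a <;> by_cases b <;> by_cases c <;> by_cases d <;> simp_all

/-- A noncrossing perfect matching of the `2(m+n)` boundary points of an `m × n`
rectangle cannot simultaneously have some horizontal separating line crossed more
than `n` times and some vertical separating line crossed more than `m` times. -/
theorem not_horizontally_and_vertically_excluded (m n : ℕ) (f : ℕ → ℕ)
    (hC : IsNCMatching (2 * (m + n)) f) :
    ¬ ((∃ i, 1 ≤ i ∧ i ≤ m - 1 ∧ n < lineCross (2 * (m + n)) (upperSide m n i) f) ∧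
       (∃ j, 1 ≤ j ∧ j ≤ n - 1 ∧ m < lineCross (2 * (m + n)) (leftSide m n j) f)) := by
  rintro ⟨⟨i, hi1, hi2, hSc⟩, j, hj1, hj2, hTc⟩
  obtain ⟨hmem, hinv, hfix, hnc⟩ := hC
  have hm : 2 ≤ m := by omega
  have hn : 2 ≤ n := by omega
  -- abbreviations for the two side predicates
  have hw1 : lineCross (2 * (m + n)) (upperSide m n i) f =
      ∑ p ∈ Finset.range (2 * (m + n)),
        (if upperSide m n i p ∧ ¬ upperSide m n i (f p) then 1 else 0) := by
    rw [lineCross, Finset.card_filter]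
  have hw2 : lineCross (2 * (m + n)) (leftSide m n j) f =
      ∑ p ∈ Finset.range (2 * (m + n)),
        (if leftSide m n j p ∧ ¬ leftSide m n j (f p) then 1 else 0) := by
    rw [lineCross, Finset.card_filter]
  -- transporting sums along the involution f
  have hbijS : ∑ p ∈ Finset.range (2 * (m + n)),
        (if upperSide m n i (f p) ∧ ¬ upperSide m n i p then (1:ℕ) else 0) =
      ∑ p ∈ Finset.range (2 * (m + n)),
        (if upperSide m n i p ∧ ¬ upperSide m n i (f p) then 1 else 0) := by
    refine Finset.sum_nbij' (i := fun p => f p) (j := fun p => f p) ?_ ?_ ?_ ?_ ?_ <;>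
      intro a ha <;> rw [Finset.mem_range] at ha
    · exact Finset.mem_range.mpr (hmem a ha)
    · exact Finset.mem_range.mpr (hmem a ha)
    · exact hinv a ha
    · exact hinv a ha
    · rw [hinv a ha]
  have hbijT : ∑ p ∈ Finset.range (2 * (m + n)),
        (if leftSide m n j (f p) ∧ ¬ leftSide m n j p then (1:ℕ) else 0) =
      ∑ p ∈ Finset.range (2 * (m + n)),
        (if leftSide m n j p ∧ ¬ leftSide m n j (f p) then 1 else 0) := by
    refine Finset.sum_nbij' (i := fun p => f p) (j := fun p => f p) ?_ ?_ ?_ ?_ ?_ <;>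
      intro a ha <;> rw [Finset.mem_range] at ha
    · exact Finset.mem_range.mpr (hmem a ha)
    · exact Finset.mem_range.mpr (hmem a ha)
    · exact hinv a ha
    · exact hinv a ha
    · rw [hinv a ha]
  -- sector counting: |A ∪ C| = m + n, |B ∪ D| = m + n
  have hfilAC : (Finset.range (2 * (m + n))).filter
        (fun p => upperSide m n i p ↔ leftSide m n j p) =
      (Finset.range j ∪ Finset.Ico (n + i) (2 * n + m - j)) ∪
        Finset.Ico (2 * n + 2 * m - i) (2 * (m + n)) := by
    ext p
    rw [Finset.mem_filter]
    simp only [Finset.mem_filter, Finset.mem_union, Finset.mem_range, Finset.mem_Ico,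
      upperSide, leftSide]
    omega
  have d1 : Disjoint (Finset.range j) (Finset.Ico (n + i) (2 * n + m - j)) := by
    rw [Finset.disjoint_left]; intro a ha hb
    simp only [Finset.mem_range] at ha; simp only [Finset.mem_Ico] at hb; omega
  have d2 : Disjoint (Finset.range j ∪ Finset.Ico (n + i) (2 * n + m - j))
      (Finset.Ico (2 * n + 2 * m - i) (2 * (m + n))) := by
    rw [Finset.disjoint_left]; intro a ha hb
    simp only [Finset.mem_union, Finset.mem_range, Finset.mem_Ico] at ha
    simp only [Finset.mem_Ico] at hb; omega
  have hcAC : ((Finset.range (2 * (m + n))).filter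
      (fun p => upperSide m n i p ↔ leftSide m n j p)).card = m + n := by
    rw [hfilAC, Finset.card_union_of_disjoint d2, Finset.card_union_of_disjoint d1,
      Finset.card_range, Nat.card_Ico, Nat.card_Ico]
    omega
  have hcBD : ((Finset.range (2 * (m + n))).filter
      (fun p => ¬ (upperSide m n i p ↔ leftSide m n j p))).card = m + n := by
    have := Finset.card_filter_add_card_filter_not
      (s := Finset.range (2 * (m + n)))
      (p := fun p => upperSide m n i p ↔ leftSide m n j p)
    rw [hcAC, Finset.card_range] at this
    omega
  have hsAC : ∑ p ∈ Finset.range (2 * (m + n)),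
      (if upperSide m n i p ↔ leftSide m n j p then (1:ℕ) else 0) = m + n := by
    rw [← Finset.card_filter]; exact hcAC
  have hsBD : ∑ p ∈ Finset.range (2 * (m + n)),
      (if ¬ (upperSide m n i p ↔ leftSide m n j p) then (1:ℕ) else 0) = m + n := by
    rw [← Finset.card_filter]; exact hcBD
  -- key bound: the two crossing numbers together are at most m + n
  have key : lineCross (2 * (m + n)) (upperSide m n i) f +
      lineCross (2 * (m + n)) (leftSide m n j) f ≤ m + n := by
    by_cases hBD : ∃ q, q < 2 * (m + n) ∧ upperSide m n i q ∧ ¬ leftSide m n j q ∧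
        ¬ upperSide m n i (f q) ∧ leftSide m n j (f q)
    · -- a B–D chord exists, so by noncrossing there is no A–C chord
      have hAC : ¬ ∃ p, p < 2 * (m + n) ∧ upperSide m n i p ∧ leftSide m n j p ∧
          ¬ upperSide m n i (f p) ∧ ¬ leftSide m n j (f p) := by
        rintro ⟨p, hp, hSp, hTp, hSfp, hTfp⟩
        obtain ⟨q, hq, hSq, hTq, hSfq, hTfq⟩ := hBD
        have hfp := hmem p hp
        have hfq := hmem q hq
        have hffp := hinv p hp
        simp only [upperSide, leftSide] at hSp hTp hSfp hTfp hSq hTq hSfq hTfq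
        rcases hTp with hpj | hpj
        · exact hnc p q hp hq ⟨by omega, by omega, by omega⟩
        · refine hnc q (f p) hq hfp ⟨by omega, by omega, ?_⟩
          rw [hffp]; omega
      -- per-chord bound with the B ∪ D indicator
      have hbijc : ∑ p ∈ Finset.range (2 * (m + n)),
            (if ¬ (upperSide m n i (f p) ↔ leftSide m n j (f p)) then (1:ℕ) else 0) =
          ∑ p ∈ Finset.range (2 * (m + n)),
            (if ¬ (upperSide m n i p ↔ leftSide m n j p) then 1 else 0) := by
        refine Finset.sum_nbij' (i := fun p => f p) (j := fun p => f p) ?_ ?_ ?_ ?_ ?_ <;>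
          intro a ha <;> rw [Finset.mem_range] at ha
        · exact Finset.mem_range.mpr (hmem a ha)
        · exact Finset.mem_range.mpr (hmem a ha)
        · exact hinv a ha
        · exact hinv a ha
      have step : ∀ p ∈ Finset.range (2 * (m + n)),
          ((if upperSide m n i p ∧ ¬ upperSide m n i (f p) then 1 else 0) +
            (if leftSide m n j p ∧ ¬ leftSide m n j (f p) then 1 else 0)) +
          ((if upperSide m n i (f p) ∧ ¬ upperSide m n i p then 1 else 0) +
            (if leftSide m n j (f p) ∧ ¬ leftSide m n j p then 1 else 0)) ≤
          (if ¬ (upperSide m n i p ↔ leftSide m n j p) then 1 else 0) +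
            (if ¬ (upperSide m n i (f p) ↔ leftSide m n j (f p)) then (1:ℕ) else 0) := by
        intro p hp
        rw [Finset.mem_range] at hp
        have hffp := hinv p hp
        refine auxBD _ _ _ _ ?_ ?_
        · rintro ⟨h1, h2, h3, h4⟩; exact hAC ⟨p, hp, h1, h2, h3, h4⟩
        · rintro ⟨h1, h2, h3, h4⟩
          refine hAC ⟨f p, hmem p hp, h1, h2, ?_, ?_⟩ <;> rw [hffp] <;> assumption
      have hsum := Finset.sum_le_sum step
      rw [Finset.sum_add_distrib, Finset.sum_add_distrib, Finset.sum_add_distrib,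
        Finset.sum_add_distrib, hbijS, hbijT, hbijc, hsBD, ← hw1, ← hw2] at hsum
      omega
    · -- no B–D chord
      push_neg at hBD
      have hbijc : ∑ p ∈ Finset.range (2 * (m + n)),
            (if upperSide m n i (f p) ↔ leftSide m n j (f p) then (1:ℕ) else 0) =
          ∑ p ∈ Finset.range (2 * (m + n)),
            (if upperSide m n i p ↔ leftSide m n j p then 1 else 0) := by
        refine Finset.sum_nbij' (i := fun p => f p) (j := fun p => f p) ?_ ?_ ?_ ?_ ?_ <;>
          intro a ha <;> rw [Finset.mem_range] at ha
        · exact Finset.mem_range.mpr (hmem a ha)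
        · exact Finset.mem_range.mpr (hmem a ha)
        · exact hinv a ha
        · exact hinv a ha
      have step : ∀ p ∈ Finset.range (2 * (m + n)),
          ((if upperSide m n i p ∧ ¬ upperSide m n i (f p) then 1 else 0) +
            (if leftSide m n j p ∧ ¬ leftSide m n j (f p) then 1 else 0)) +
          ((if upperSide m n i (f p) ∧ ¬ upperSide m n i p then 1 else 0) +
            (if leftSide m n j (f p) ∧ ¬ leftSide m n j p then 1 else 0)) ≤
          (if upperSide m n i p ↔ leftSide m n j p then 1 else 0) +
            (if upperSide m n i (f p) ↔ leftSide m n j (f p) then (1:ℕ) else 0) := by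
        intro p hp
        rw [Finset.mem_range] at hp
        have hffp := hinv p hp
        refine auxAC _ _ _ _ ?_ ?_
        · rintro ⟨h1, h2, h3, h4⟩; exact (hBD p hp h1 h2 h3) h4
        · rintro ⟨h1, h2, h3, h4⟩
          have := hBD (f p) (hmem p hp) h1 h2
          rw [hffp] at this
          exact (this h3) h4
      have hsum := Finset.sum_le_sum step
      rw [Finset.sum_add_distrib, Finset.sum_add_distrib, Finset.sum_add_distrib,
        Finset.sum_add_distrib, hbijS, hbijT, hbijc, hsAC, ← hw1, ← hw2] at hsum
      omega
  omega
end

section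
/- Let m₁, m₂, n ≥ 1. Suppose C₁ is a noncrossing matching of the boundary points of an m₁×n rectangle with no arc having both endpoints on the bottom side and every bottom point matched across (the bottom is a 'no-return' side), and C₂ similarly has its top side with no returns. Then gluing C₁ atop C₂ along the n bottom/top points yields a noncrossing matching C of the boundary of the (m₁+m₂)×n rectangle, and every vertical separating line of C is crossed at most d^v(C₁) + d^v(C₂) ≤ m₁ + m₂ times, while every horizontal separating line lying within the C₁ (resp. C₂) part is crossed the same number of times as in C₁ (resp. C₂). -/
/-  Boundary points of an `m × n` rectangle, in circular order: `n` top points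
`0..n-1` (left to right), `m` right points `n..n+m-1` (top to bottom), `n` bottom
points `n+m..2n+m-1` (right to left), `m` left points `2n+m..2n+2m-1` (bottom to
top). -/

/-- The left side of the `j`-th vertical separating line (`1 ≤ j ≤ n-1`) of the
`m × n` rectangle. -/
def vSide (m n j p : ℕ) : Prop := p < j ∨ 2 * n + m - j ≤ p

/-- The upper side of the `i`-th horizontal separating line (`1 ≤ i ≤ m-1`) of
the `m × n` rectangle. -/
def hSide (m n i p : ℕ) : Prop := p < n + i ∨ 2 * n + 2 * m - i ≤ p

instance (m n j : ℕ) : DecidablePred (vSide m n j) := fun p => by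
  unfold vSide; infer_instance

instance (m n i : ℕ) : DecidablePred (hSide m n i) := fun p => by
  unfold hSide; infer_instance

/-- `d^v(C)`: the maximum, over the `n-1` vertical separating lines of the
`m × n` rectangle, of the number of intersections of the matching with the line. -/
def dv (m n : ℕ) (f : ℕ → ℕ) : ℕ :=
  (Finset.Icc 1 (n - 1)).sup (fun j => lineCross (2 * (m + n)) (vSide m n j) f)

/-- Embedding of the non-bottom boundary points of the upper `m₁ × n` rectangle
into the boundary points of the glued `(m₁+m₂) × n` rectangle. -/
def emb₁ (m₁ m₂ n p : ℕ) : ℕ := if p < n + m₁ then p else p + 2 * m₂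


/-!
Gluing joins each arc of `C₁` ending on the bottom side with the arc of `C₂` starting at the
glued top point; all other arcs are kept. Two crossing glued arcs would have crossing pieces in
`C₁` or in `C₂`, so the result is a noncrossing matching, and a horizontal line inside one of the
two parts is crossed exactly by the arcs of that part. A glued arc crossing a vertical line has a
piece crossing it, which bounds `d^v` of the composite by `d^v(C₁) + d^v(C₂)`. On a side without
returns, the points between a crossing point and the line are matched in reverse order beyond its
partner; counting the remaining boundary points bounds the crossings of every vertical line by the
height of the rectangle.
-/

theorem lineCross_eq_of_bijOn {P Q : ℕ} {S T : ℕ → Prop} [DecidablePred S] [DecidablePred T]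
    {f g e : ℕ → ℕ} (he : Set.BijOn e {p | p < P ∧ S p} {q | q < Q ∧ T q})
    (hcross : ∀ p, p < P → S p → (T (g (e p)) ↔ S (f p))) :
    lineCross P S f = lineCross Q T g := by
  unfold lineCross
  apply Finset.card_nbij e
  · intro p hp
    simp only [Finset.coe_filter, Finset.mem_range, Set.mem_ofPred_eq] at hp ⊢
    exact ⟨(he.mapsTo ⟨hp.1, hp.2.1⟩).1, (he.mapsTo ⟨hp.1, hp.2.1⟩).2,
      (hcross p hp.1 hp.2.1).not.mpr hp.2.2⟩
  · exact he.injOn.mono fun p hp => by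
      simp only [Finset.coe_filter, Finset.mem_range, Set.mem_ofPred_eq] at hp; exact ⟨hp.1, hp.2.1⟩
  · intro q hq
    simp only [Finset.coe_filter, Finset.mem_range, Set.mem_ofPred_eq] at hq
    obtain ⟨p, ⟨hpP, hp⟩, rfl⟩ := he.surjOn ⟨hq.1, hq.2.1⟩
    exact ⟨p, by simpa [hpP, hp] using (hcross p hpP hp).not.mp hq.2.2, rfl⟩

namespace IsNCMatching

variable {P : ℕ} {f : ℕ → ℕ}

theorem apply_lt (hf : IsNCMatching P f) {p : ℕ} (hp : p < P) : f p < P := hf.1 p hp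

theorem apply_apply (hf : IsNCMatching P f) {p : ℕ} (hp : p < P) : f (f p) = p := hf.2.1 p hp

theorem apply_ne (hf : IsNCMatching P f) {p : ℕ} (hp : p < P) : f p ≠ p := hf.2.2.1 p hp

theorem not_cross (hf : IsNCMatching P f) {p q : ℕ} (hp : p < P) (hq : q < P) :
    ¬ (p < q ∧ q < f p ∧ f p < f q) := hf.2.2.2 p q hp hq

theorem eq_of_apply_eq (hf : IsNCMatching P f) {p q : ℕ} (hp : p < P) (hq : q < P) (h : f p = f q) :
    p = q := by
  rw [← hf.apply_apply hp, h, hf.apply_apply hq]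

theorem apply_mem_Ioo (hf : IsNCMatching P f) {a x : ℕ} (ha : a < P) (hx : x < P)
    (hax : x ∈ Set.Ioo a (f a)) : f x ∈ Set.Ioo a (f a) := by
  obtain ⟨hax, hxa⟩ := hax
  have hfx : f (f x) = x := hf.apply_apply hx
  have hxa' : f x ≠ f a := fun h => by have := hf.eq_of_apply_eq hx ha h; omega
  have hxa'' : f x ≠ a := fun h => by rw [h] at hfx; omega
  have c₁ := hf.not_cross ha hx
  have c₂ := hf.not_cross (hf.apply_lt hx) ha
  rw [hfx] at c₂
  constructor <;> omega

/-- Two arcs coincide, or neither separates the endpoints of the other. -/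
theorem chord_cases (hf : IsNCMatching P f) {x y : ℕ} (hx : x < P) (hy : y < P) :
    (y = x ∧ f y = f x) ∨ (y = f x ∧ f y = x) ∨
    (y ≠ x ∧ y ≠ f x ∧ f y ≠ x ∧ f y ≠ f x ∧
      ((x < y ∧ y < f x ∨ f x < y ∧ y < x) ↔ (x < f y ∧ f y < f x ∨ f x < f y ∧ f y < x))) := by
  by_cases h₁ : y = x
  · exact Or.inl ⟨h₁, by rw [h₁]⟩
  by_cases h₂ : y = f x
  · exact Or.inr <| Or.inl ⟨h₂, by rw [h₂, hf.apply_apply hx]⟩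
  have h₃ : f y ≠ x := fun h => h₂ (by rw [← h, hf.apply_apply hy])
  have h₄ : f y ≠ f x := fun h => h₁ (hf.eq_of_apply_eq hy hx h)
  have hfx := hf.apply_lt hx
  have hfy := hf.apply_lt hy
  refine Or.inr <| Or.inr ⟨h₁, h₂, h₃, h₄, ?_⟩
  have n₁ := fun h => hf.apply_mem_Ioo hx hy h
  have n₂ := fun h => hf.apply_mem_Ioo hfx hy h
  have n₃ := fun h => hf.apply_mem_Ioo hx hfy h
  have n₄ := fun h => hf.apply_mem_Ioo hfx hfy h
  simp only [Set.mem_Ioo, hf.apply_apply hx, hf.apply_apply hy] at n₁ n₂ n₃ n₄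
  omega

theorem reverse (hf : IsNCMatching P f) : IsNCMatching P (fun p => P - 1 - f (P - 1 - p)) := by
  obtain ⟨hlt, hinv, hne, hnc⟩ := hf
  have hrev : ∀ p, p < P → P - 1 - p < P := by omega
  refine ⟨fun p hp => ?_, fun p hp => ?_, fun p hp => ?_, fun p q hp hq => ?_⟩
  · have := hlt _ (hrev p hp); beta_reduce; omega
  · have := hlt _ (hrev p hp)
    beta_reduce
    rw [show P - 1 - (P - 1 - f (P - 1 - p)) = f (P - 1 - p) by omega, hinv _ (hrev p hp)]
    omega
  · have := hlt _ (hrev p hp); have := hne _ (hrev p hp); beta_reduce; omega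
  · beta_reduce
    have c := hnc _ _ (hlt _ (hrev q hq)) (hlt _ (hrev p hp))
    rw [hinv _ (hrev q hq), hinv _ (hrev p hp)] at c
    have := hlt _ (hrev p hp); have := hlt _ (hrev q hq)
    omega

theorem card_le_of_mapsTo_Ico {s : Finset ℕ} {a b : ℕ} (hf : IsNCMatching P f)
    (hs : ∀ p ∈ s, p < P) (hmaps : ∀ p ∈ s, f p ∈ Finset.Ico a b) : s.card ≤ b - a := by
  simpa using Finset.card_le_card_of_injOn f hmaps
    fun p hp q hq h => hf.eq_of_apply_eq (hs p hp) (hs q hq) h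

/-- The points of the block after `p` lie under the arc `(p, f p)`, so their partners lie in
`[b, f p)`. -/
theorem two_mul_le_of_noReturn (hf : IsNCMatching P f)
    {a b : ℕ} (hret : ∀ p, a ≤ p → p < b → ¬ (a ≤ f p ∧ f p < b)) (hbP : b ≤ P)
    {p : ℕ} (hap : a ≤ p) (hpb : p < b) (hbf : b ≤ f p) : 2 * b ≤ f p + p + 1 := by
  have := hf.card_le_of_mapsTo_Ico (s := Finset.Ioo p b) (a := b) (b := f p)
    (fun x hx => by simp at hx; omega) fun x hx => by
      simp only [Finset.mem_Ioo] at hx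
      obtain ⟨h₁, h₂⟩ := hf.apply_mem_Ioo (by omega) (by omega) ⟨hx.1, by omega⟩
      have := hret x (by omega) hx.2
      simp only [Finset.mem_Ico]; omega
  simp at this; omega

/-- For the top side of an `m × n` rectangle: `[a, b) = [0, n)`, `[g, h)` is the part of the
boundary right of the line, and `μ = m`. -/
theorem lineCross_le_of_noReturn (hf : IsNCMatching P f)
    {a b g h μ : ℕ} (hret : ∀ p, a ≤ p → p < b → ¬ (a ≤ f p ∧ f p < b))
    (hgb : g ≤ b) (hhP : h ≤ P)
    (hgh : g + h = 2 * b + μ) (hPa : P + 2 * a = 2 * b + 2 * μ) :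
    lineCross P (fun p => p < g ∨ h ≤ p) f ≤ μ := by
  classical
  unfold lineCross
  set C := (Finset.range P).filter (fun p => (p < g ∨ h ≤ p) ∧ ¬ (f p < g ∨ h ≤ f p))
  have hC : ∀ p ∈ C, p < P ∧ (p < g ∨ h ≤ p) ∧ g ≤ f p ∧ f p < h := fun p hp => by
    simp only [C, Finset.mem_filter, Finset.mem_range] at hp; omega
  set X := C.filter (fun p => a ≤ p ∧ p < g)
  set Y := C.filter (fun p => ¬ (a ≤ p ∧ p < g))
  have hY : ∀ q ∈ Y, q < P ∧ (q < a ∨ h ≤ q) ∧ g ≤ f q ∧ f q < h := fun q hq => by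
    simp only [Y, Finset.mem_filter] at hq; have := hC q hq.1; omega
  rw [← Finset.card_filter_add_card_filter_not (s := C) (fun p => a ≤ p ∧ p < g)]
  change X.card + Y.card ≤ μ
  by_cases hXe : X.Nonempty
  · -- the first crossing point `p₀` of the block bounds both `X` and `Y`
    set p₀ := X.min' hXe
    have hp₀ : p₀ ∈ X := X.min'_mem hXe
    simp only [X, Finset.mem_filter] at hp₀
    obtain ⟨hp₀P, -, hgf, hfh⟩ := hC p₀ hp₀.1
    have hbf : b ≤ f p₀ := by have := hret p₀ hp₀.2.1 (by omega); omega
    have hX : X.card ≤ g - p₀ := by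
      simpa using Finset.card_le_card (s := X) (t := Finset.Ico p₀ g) fun x hx => by
        have := X.min'_le x hx
        simp only [X, Finset.mem_filter] at hx
        simp only [Finset.mem_Ico]; omega
    have hY' : Y.card ≤ h - (f p₀ + 1) := hf.card_le_of_mapsTo_Ico (fun q hq => (hY q hq).1)
      fun q hq => by
        obtain ⟨hqP, hq, hgq, hqh⟩ := hY q hq
        have hne : f q ≠ f p₀ := fun e => by have := hf.eq_of_apply_eq hqP hp₀P e; omega
        have c₁ := hf.not_cross hqP hp₀P
        have c₂ := hf.not_cross hp₀P (hf.apply_lt hqP)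
        rw [hf.apply_apply hqP] at c₂
        simp only [Finset.mem_Ico]; omega
    have := hf.two_mul_le_of_noReturn hret (by omega) hp₀.2.1 (by omega) hbf
    omega
  · -- otherwise `Y` and the partners of `[a, g)` are disjoint sets outside `[a, h)`
    rw [Finset.not_nonempty_iff_eq_empty.mp hXe, Finset.card_empty, zero_add]
    have hW : (Finset.Ico a g).image f ⊆ Finset.range a ∪ Finset.Ico h P := fun w hw => by
      obtain ⟨p, hp, rfl⟩ := Finset.mem_image.mp hw
      simp only [Finset.mem_Ico] at hp
      have hpX : p ∉ X := fun h => hXe ⟨p, h⟩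
      simp only [X, C, Finset.mem_filter, Finset.mem_range] at hpX
      have := hret p hp.1 (by omega)
      have := hf.apply_lt (p := p) (by omega)
      simp only [Finset.mem_union, Finset.mem_range, Finset.mem_Ico]; omega
    have hYD : Y ⊆ Finset.range a ∪ Finset.Ico h P := fun q hq => by
      have := hY q hq
      simp only [Finset.mem_union, Finset.mem_range, Finset.mem_Ico]; omega
    have hdisj : Disjoint Y ((Finset.Ico a g).image f) := Finset.disjoint_left.mpr
      fun q hq hq' => by
        obtain ⟨p, hp, rfl⟩ := Finset.mem_image.mp hq'
        simp only [Finset.mem_Ico] at hp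
        have := hY _ hq
        rw [hf.apply_apply (by omega)] at this
        omega
    have hcard := Finset.card_le_card (Finset.union_subset hYD hW)
    rw [Finset.card_union_of_disjoint hdisj, Finset.card_image_of_injOn
      fun x hx y hy e => hf.eq_of_apply_eq (by simp at hx; omega) (by simp at hy; omega) e] at hcard
    have := Finset.card_union_le (Finset.range a) (Finset.Ico h P)
    simp only [Finset.card_range, Nat.card_Ico] at hcard this
    omega

/-- Each crossing arc has exactly one endpoint on either side of the line. -/
theorem lineCross_not (hf : IsNCMatching P f)
    (S : ℕ → Prop) [DecidablePred S] : lineCross P (fun p => ¬ S p) f = lineCross P S f := by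
  unfold lineCross
  apply Finset.card_nbij' f f <;> intro p hp <;>
    simp only [Finset.coe_filter, Finset.mem_range, Set.mem_ofPred_eq, not_not] at hp ⊢
  · exact ⟨hf.apply_lt hp.1, hp.2.2, by rw [hf.apply_apply hp.1]; exact hp.2.1⟩
  · exact ⟨hf.apply_lt hp.1, hp.2.2, by rw [hf.apply_apply hp.1]; exact hp.2.1⟩
  · exact hf.apply_apply hp.1
  · exact hf.apply_apply hp.1

end IsNCMatching

namespace IsNCMatching

variable {m n j : ℕ} {f : ℕ → ℕ}

theorem lineCross_vSide_le_of_top (hf : IsNCMatching (2 * (m + n)) f)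
    (htop : ∀ p, p < n → ¬ f p < n) (hj : j ≤ n) :
    lineCross (2 * (m + n)) (vSide m n j) f ≤ m :=
  hf.lineCross_le_of_noReturn (a := 0) (b := n) (fun p _ hp => by have := htop p hp; omega)
    hj (by omega) (by omega) (by omega)

theorem lineCross_vSide_le_of_bot (hf : IsNCMatching (2 * (m + n)) f)
    (hbot : ∀ p, n + m ≤ p → p < 2 * n + m → ¬ (n + m ≤ f p ∧ f p < 2 * n + m)) (hj : j ≤ n) :
    lineCross (2 * (m + n)) (vSide m n j) f ≤ m := by
  set P := 2 * (m + n)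
  -- reversing the circular order turns the bottom side into the block `[m, n + m)`
  have hrev : lineCross P (vSide m n j) f =
      lineCross P (fun p => p < m + j ∨ 2 * n + 2 * m - j ≤ p)
        (fun p => P - 1 - f (P - 1 - p)) := by
    refine lineCross_eq_of_bijOn (e := fun p => P - 1 - p)
      ⟨fun p hp => ?_, fun p hp q hq h => ?_, fun q hq => ⟨P - 1 - q, ?_, ?_⟩⟩ fun p hp _ => ?_
    all_goals simp only [vSide, Set.mem_ofPred_eq] at *
    all_goals try omega
    have := hf.apply_lt hp
    rw [show P - 1 - (P - 1 - p) = p by omega]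
    omega
  rw [hrev]
  refine hf.reverse.lineCross_le_of_noReturn (a := m) (b := n + m) (fun p h₁ h₂ => ?_)
    (by omega) (by omega) (by omega) (by omega)
  have := hbot (P - 1 - p) (by omega) (by omega)
  have := hf.apply_lt (p := P - 1 - p) (by omega)
  omega

end IsNCMatching

theorem lineCross_vSide_le_dv {m n j : ℕ} (f : ℕ → ℕ) (hj₁ : 1 ≤ j) (hj₂ : j ≤ n - 1) :
    lineCross (2 * (m + n)) (vSide m n j) f ≤ dv m n f :=
  Finset.le_sup (f := fun j => lineCross (2 * (m + n)) (vSide m n j) f)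
    (Finset.mem_Icc.mpr ⟨hj₁, hj₂⟩)

theorem dv_le_of_top {m n : ℕ} {f : ℕ → ℕ} (hf : IsNCMatching (2 * (m + n)) f)
    (htop : ∀ p, p < n → ¬ f p < n) : dv m n f ≤ m :=
  Finset.sup_le fun j hj => hf.lineCross_vSide_le_of_top htop (by simp at hj; omega)

theorem dv_le_of_bot {m n : ℕ} {f : ℕ → ℕ} (hf : IsNCMatching (2 * (m + n)) f)
    (hbot : ∀ p, n + m ≤ p → p < 2 * n + m → ¬ (n + m ≤ f p ∧ f p < 2 * n + m)) :
    dv m n f ≤ m :=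
  Finset.sup_le fun j hj => hf.lineCross_vSide_le_of_bot hbot (by simp at hj; omega)

theorem emb₁_cases (m₁ m₂ n p : ℕ) :
    (p < n + m₁ ∧ emb₁ m₁ m₂ n p = p) ∨ (n + m₁ ≤ p ∧ emb₁ m₁ m₂ n p = p + 2 * m₂) := by
  unfold emb₁; split_ifs <;> omega

/-- `F` is `C₁ ∗_v C₂`: the non-bottom points of `C₁` sit in the glued rectangle via `emb₁`, the
non-top points of `C₂` via `p ↦ p + m₁`, and the bottom point `b` of `C₁` is glued to the top point
`2 * n + m₁ - 1 - b` of `C₂`. -/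
structure IsVComp (m₁ m₂ n : ℕ) (f₁ f₂ F : ℕ → ℕ) : Prop where
  nc₁ : IsNCMatching (2 * (m₁ + n)) f₁
  nc₂ : IsNCMatching (2 * (m₂ + n)) f₂
  noReturn_bot : ∀ p, n + m₁ ≤ p → p < 2 * n + m₁ → ¬ (n + m₁ ≤ f₁ p ∧ f₁ p < 2 * n + m₁)
  noReturn_top : ∀ p, p < n → ¬ f₂ p < n
  apply_emb₁ : ∀ p, p < 2 * (m₁ + n) → (p < n + m₁ ∨ 2 * n + m₁ ≤ p) →
    F (emb₁ m₁ m₂ n p) =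
      if n + m₁ ≤ f₁ p ∧ f₁ p < 2 * n + m₁
      then f₂ (2 * n + m₁ - 1 - f₁ p) + m₁
      else emb₁ m₁ m₂ n (f₁ p)
  apply_add : ∀ p, p < 2 * (m₂ + n) → n ≤ p →
    F (p + m₁) =
      if f₂ p < n
      then emb₁ m₁ m₂ n (f₁ (2 * n + m₁ - 1 - f₂ p))
      else f₂ p + m₁

namespace IsVComp

variable {m₁ m₂ n : ℕ} {f₁ f₂ F : ℕ → ℕ}

theorem partner_of_bot (G : IsVComp m₁ m₂ n f₁ f₂ F) {b : ℕ} (h₁ : n + m₁ ≤ b)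
    (h₂ : b < 2 * n + m₁) : f₁ b < 2 * (m₁ + n) ∧ (f₁ b < n + m₁ ∨ 2 * n + m₁ ≤ f₁ b) := by
  have := G.nc₁.apply_lt (p := b) (by omega); have := G.noReturn_bot b h₁ h₂; omega

theorem partner_of_top (G : IsVComp m₁ m₂ n f₁ f₂ F) {k : ℕ} (hk : k < n) :
    n ≤ f₂ k ∧ f₂ k < 2 * (m₂ + n) := by
  have := G.nc₂.apply_lt (p := k) (by omega); have := G.noReturn_top k hk; omega

theorem apply_emb₁_of_not_bot (G : IsVComp m₁ m₂ n f₁ f₂ F) {p : ℕ} (hp : p < 2 * (m₁ + n))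
    (hpb : p < n + m₁ ∨ 2 * n + m₁ ≤ p) (hfp : f₁ p < n + m₁ ∨ 2 * n + m₁ ≤ f₁ p) :
    F (emb₁ m₁ m₂ n p) = emb₁ m₁ m₂ n (f₁ p) := by
  rw [G.apply_emb₁ p hp hpb, if_neg (by omega)]

theorem apply_emb₁_of_bot (G : IsVComp m₁ m₂ n f₁ f₂ F) {p : ℕ} (hp : p < 2 * (m₁ + n))
    (hpb : p < n + m₁ ∨ 2 * n + m₁ ≤ p) (h₁ : n + m₁ ≤ f₁ p) (h₂ : f₁ p < 2 * n + m₁) :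
    F (emb₁ m₁ m₂ n p) = f₂ (2 * n + m₁ - 1 - f₁ p) + m₁ := by
  rw [G.apply_emb₁ p hp hpb, if_pos ⟨h₁, h₂⟩]

theorem apply_add_of_not_top (G : IsVComp m₁ m₂ n f₁ f₂ F) {k : ℕ} (hk : k < 2 * (m₂ + n))
    (hnk : n ≤ k) (hfk : n ≤ f₂ k) : F (k + m₁) = f₂ k + m₁ := by
  rw [G.apply_add k hk hnk, if_neg (by omega)]

theorem apply_add_of_top (G : IsVComp m₁ m₂ n f₁ f₂ F) {k : ℕ} (hk : k < 2 * (m₂ + n))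
    (hnk : n ≤ k) (hfk : f₂ k < n) :
    F (k + m₁) = emb₁ m₁ m₂ n (f₁ (2 * n + m₁ - 1 - f₂ k)) := by
  rw [G.apply_add k hk hnk, if_pos hfk]

/-- The four kinds of arc ends of `F`: an arc of `C₁`, an arc of `C₁` continued through the
bottom into `C₂`, an arc of `C₂`, and an arc of `C₂` continued through the top into `C₁`. -/
theorem apply_cases (G : IsVComp m₁ m₂ n f₁ f₂ F) {q : ℕ} (hq : q < 2 * ((m₁ + m₂) + n)) :
    (∃ x, x < 2 * (m₁ + n) ∧
      ((x < n + m₁ ∨ 2 * n + m₁ ≤ x) ∧ f₁ x < 2 * (m₁ + n) ∧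
        (f₁ x < n + m₁ ∨ 2 * n + m₁ ≤ f₁ x)) ∧
      q = emb₁ m₁ m₂ n x ∧ F q = emb₁ m₁ m₂ n (f₁ x)) ∨
    (∃ x y, x < 2 * (m₁ + n) ∧ y < 2 * (m₂ + n) ∧
      ((x < n + m₁ ∨ 2 * n + m₁ ≤ x) ∧ n + m₁ ≤ f₁ x ∧ f₁ x < 2 * n + m₁ ∧
        y = 2 * n + m₁ - 1 - f₁ x ∧ n ≤ f₂ y ∧ f₂ y < 2 * (m₂ + n)) ∧
      q = emb₁ m₁ m₂ n x ∧ F q = f₂ y + m₁) ∨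
    (∃ y, y < 2 * (m₂ + n) ∧ (n ≤ y ∧ n ≤ f₂ y ∧ f₂ y < 2 * (m₂ + n)) ∧
      q = y + m₁ ∧ F q = f₂ y + m₁) ∨
    (∃ y x, y < 2 * (m₂ + n) ∧ x < 2 * (m₁ + n) ∧
      (n ≤ y ∧ f₂ y < n ∧ x = 2 * n + m₁ - 1 - f₂ y ∧ f₁ x < 2 * (m₁ + n) ∧
        (f₁ x < n + m₁ ∨ 2 * n + m₁ ≤ f₁ x)) ∧
      q = y + m₁ ∧ F q = emb₁ m₁ m₂ n (f₁ x)) := by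
  by_cases hu : q < n + m₁ ∨ 2 * n + m₁ + 2 * m₂ ≤ q
  · obtain ⟨x, hx, hxb, rfl⟩ : ∃ x, x < 2 * (m₁ + n) ∧ (x < n + m₁ ∨ 2 * n + m₁ ≤ x) ∧
        q = emb₁ m₁ m₂ n x := by
      rcases hu with hu | hu
      · exact ⟨q, by omega, by omega, by unfold emb₁; rw [if_pos hu]⟩
      · exact ⟨q - 2 * m₂, by omega, by omega, by unfold emb₁; rw [if_neg (by omega)]; omega⟩
    have hfx := G.nc₁.apply_lt hx
    by_cases hb : n + m₁ ≤ f₁ x ∧ f₁ x < 2 * n + m₁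
    · have := G.partner_of_top (k := 2 * n + m₁ - 1 - f₁ x) (by omega)
      exact Or.inr <| Or.inl ⟨x, _, hx, by omega, ⟨hxb, hb.1, hb.2, rfl, this⟩, rfl,
        G.apply_emb₁_of_bot hx hxb hb.1 hb.2⟩
    · exact Or.inl ⟨x, hx, ⟨hxb, hfx, by omega⟩, rfl,
        G.apply_emb₁_of_not_bot hx hxb (by omega)⟩
  · obtain ⟨y, hy, hny, rfl⟩ : ∃ y, y < 2 * (m₂ + n) ∧ n ≤ y ∧ q = y + m₁ :=
      ⟨q - m₁, by omega, by omega, by omega⟩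
    by_cases ht : f₂ y < n
    · have := G.partner_of_bot (b := 2 * n + m₁ - 1 - f₂ y) (by omega) (by omega)
      exact Or.inr <| Or.inr <| Or.inr ⟨y, _, hy, by omega, ⟨hny, ht, rfl, this⟩, rfl,
        G.apply_add_of_top hy hny ht⟩
    · have := G.nc₂.apply_lt hy
      exact Or.inr <| Or.inr <| Or.inl ⟨y, hy, ⟨hny, by omega, this⟩, rfl,
        G.apply_add_of_not_top hy hny (by omega)⟩

theorem not_cross (G : IsVComp m₁ m₂ n f₁ f₂ F) {q q' : ℕ} (hq : q < 2 * ((m₁ + m₂) + n))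
    (hq' : q' < 2 * ((m₁ + m₂) + n)) : ¬ (q < q' ∧ q' < F q ∧ F q < F q') := by
  -- a crossing of two arcs of `F` is a crossing of their pieces in `C₁` or in `C₂`, since `emb₁`
  -- is monotone and the points of `C₂` take the place of the bottom side of `C₁`
  rcases G.apply_cases hq with ⟨x, hx, _, rfl, hF⟩ | ⟨x, y, hx, hy, _, rfl, hF⟩ |
    ⟨y, hy, _, rfl, hF⟩ | ⟨y, x, hy, hx, _, rfl, hF⟩ <;>
  rcases G.apply_cases hq' with ⟨x', hx', _, rfl, hF'⟩ | ⟨x', y', hx', hy', _, rfl, hF'⟩ |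
    ⟨y', hy', _, rfl, hF'⟩ | ⟨y', x', hy', hx', _, rfl, hF'⟩ <;>
  rw [hF, hF'] <;>
  (try have := G.nc₁.chord_cases hx hx') <;>
  (try have := G.nc₂.chord_cases hy hy') <;>
  (try have := emb₁_cases m₁ m₂ n x) <;>
  (try have := emb₁_cases m₁ m₂ n (f₁ x)) <;>
  (try have := emb₁_cases m₁ m₂ n x') <;>
  (try have := emb₁_cases m₁ m₂ n (f₁ x')) <;>
  omega

theorem apply_lt (G : IsVComp m₁ m₂ n f₁ f₂ F) {q : ℕ} (hq : q < 2 * ((m₁ + m₂) + n)) :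
    F q < 2 * ((m₁ + m₂) + n) := by
  rcases G.apply_cases hq with ⟨x, -, _, rfl, hF⟩ | ⟨x, y, -, -, _, rfl, hF⟩ |
    ⟨y, -, _, rfl, hF⟩ | ⟨y, x, -, -, _, rfl, hF⟩ <;>
  rw [hF] <;> (try have := emb₁_cases m₁ m₂ n (f₁ x)) <;> omega

theorem apply_ne (G : IsVComp m₁ m₂ n f₁ f₂ F) {q : ℕ} (hq : q < 2 * ((m₁ + m₂) + n)) :
    F q ≠ q := by
  rcases G.apply_cases hq with ⟨x, hx, _, rfl, hF⟩ | ⟨x, y, -, -, _, rfl, hF⟩ |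
    ⟨y, hy, _, rfl, hF⟩ | ⟨y, x, _, -, _, rfl, hF⟩ <;>
  rw [hF] <;> (try have := emb₁_cases m₁ m₂ n x) <;> (try have := emb₁_cases m₁ m₂ n (f₁ x))
  · have := G.nc₁.apply_ne hx; omega
  · omega
  · have := G.nc₂.apply_ne hy; omega
  · omega

theorem apply_apply (G : IsVComp m₁ m₂ n f₁ f₂ F) {q : ℕ} (hq : q < 2 * ((m₁ + m₂) + n)) :
    F (F q) = q := by
  rcases G.apply_cases hq with ⟨x, hx, ⟨hxb, hfx, hfxb⟩, rfl, hF⟩ |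
    ⟨x, y, hx, hy, ⟨hxb, hb₁, hb₂, rfl, hfy, hfy'⟩, rfl, hF⟩ |
    ⟨y, hy, ⟨hny, hfy, hfy'⟩, rfl, hF⟩ | ⟨y, x, hy, hx, ⟨hny, hfy, rfl, hfx, hfxb⟩, rfl, hF⟩ <;>
  rw [hF]
  · rw [G.apply_emb₁_of_not_bot hfx hfxb (by rwa [G.nc₁.apply_apply hx]), G.nc₁.apply_apply hx]
  · rw [G.apply_add_of_top hfy' hfy (by rw [G.nc₂.apply_apply hy]; omega), G.nc₂.apply_apply hy,
      show 2 * n + m₁ - 1 - (2 * n + m₁ - 1 - f₁ x) = f₁ x by omega, G.nc₁.apply_apply hx]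
  · rw [G.apply_add_of_not_top hfy' hfy (by rwa [G.nc₂.apply_apply hy]), G.nc₂.apply_apply hy]
  · rw [G.apply_emb₁_of_bot hfx hfxb (by rw [G.nc₁.apply_apply hx]; omega)
      (by rw [G.nc₁.apply_apply hx]; omega), G.nc₁.apply_apply hx,
      show 2 * n + m₁ - 1 - (2 * n + m₁ - 1 - f₂ y) = f₂ y by omega, G.nc₂.apply_apply hy]

theorem isNCMatching (G : IsVComp m₁ m₂ n f₁ f₂ F) : IsNCMatching (2 * ((m₁ + m₂) + n)) F :=
  ⟨fun _ => G.apply_lt, fun _ => G.apply_apply, fun _ => G.apply_ne, fun _ _ => G.not_cross⟩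

theorem lineCross_hSide_upper (G : IsVComp m₁ m₂ n f₁ f₂ F) {i : ℕ} (hi : i ≤ m₁) :
    lineCross (2 * ((m₁ + m₂) + n)) (hSide (m₁ + m₂) n i) F
      = lineCross (2 * (m₁ + n)) (hSide m₁ n i) f₁ := by
  refine (lineCross_eq_of_bijOn (e := emb₁ m₁ m₂ n) ⟨fun p hp => ?_, fun p hp q hq h => ?_,
    fun q hq => ⟨if q < n + m₁ then q else q - 2 * m₂, ?_, ?_⟩⟩ fun p hp hpS => ?_).symm
  all_goals simp only [hSide, Set.mem_ofPred_eq] at *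
  · have := emb₁_cases m₁ m₂ n p; omega
  · have := emb₁_cases m₁ m₂ n p; have := emb₁_cases m₁ m₂ n q; omega
  · split_ifs <;> omega
  · unfold emb₁; split_ifs <;> omega
  · rw [G.apply_emb₁ p hp (by omega)]
    split_ifs with hb
    · have := G.partner_of_top (k := 2 * n + m₁ - 1 - f₁ p) (by omega); omega
    · have := G.nc₁.apply_lt hp; have := emb₁_cases m₁ m₂ n (f₁ p); omega

theorem lineCross_hSide_lower (G : IsVComp m₁ m₂ n f₁ f₂ F) {i : ℕ} (hi : i ≤ m₂) :
    lineCross (2 * ((m₁ + m₂) + n)) (hSide (m₁ + m₂) n (m₁ + i)) F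
      = lineCross (2 * (m₂ + n)) (hSide m₂ n i) f₂ := by
  rw [← G.isNCMatching.lineCross_not, ← G.nc₂.lineCross_not]
  refine (lineCross_eq_of_bijOn (e := (· + m₁)) ⟨fun p hp => ?_, fun p hp q hq h => ?_,
    fun q hq => ⟨q - m₁, ?_, ?_⟩⟩ fun p hp hpS => ?_).symm
  all_goals simp only [hSide, Set.mem_ofPred_eq] at *
  all_goals try omega
  rw [G.apply_add p hp (by omega)]
  split_ifs with ht
  · have := G.partner_of_bot (b := 2 * n + m₁ - 1 - f₂ p) (by omega) (by omega)
    have := emb₁_cases m₁ m₂ n (f₁ (2 * n + m₁ - 1 - f₂ p)); omega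
  · have := G.nc₂.apply_lt hp; omega

/-- Every arc of `F` crossing a vertical line has a piece in `C₁` or in `C₂` crossing it; the map
sends each crossing piece back to the end of its glued arc on the same side of the line. -/
theorem lineCross_vSide_le (G : IsVComp m₁ m₂ n f₁ f₂ F) {j : ℕ} (hj : j ≤ n) :
    lineCross (2 * ((m₁ + m₂) + n)) (vSide (m₁ + m₂) n j) F
      ≤ lineCross (2 * (m₁ + n)) (vSide m₁ n j) f₁ +
        lineCross (2 * (m₂ + n)) (vSide m₂ n j) f₂ := by
  unfold lineCross
  rw [← Finset.card_disjSum]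
  refine Finset.card_le_card_of_surjOn (Sum.elim
    (fun x => if n + m₁ ≤ x ∧ x < 2 * n + m₁ then f₂ (2 * n + m₁ - 1 - x) + m₁ else emb₁ m₁ m₂ n x)
    (fun y => if y < n then emb₁ m₁ m₂ n (f₁ (2 * n + m₁ - 1 - y)) else y + m₁)) ?_
  intro q hq
  rw [Finset.mem_coe, Finset.mem_filter, Finset.mem_range] at hq
  simp only [vSide] at hq
  simp only [Set.mem_image, Finset.mem_coe, Sum.exists, Finset.inl_mem_disjSum,
    Finset.inr_mem_disjSum, Sum.elim_inl, Sum.elim_inr, Finset.mem_filter]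
  simp only [Finset.mem_range, vSide]
  rcases G.apply_cases hq.1 with ⟨x, hx, hxb, rfl, hF⟩ |
    ⟨x, y, hx, hy, ⟨hxb, hb₁, hb₂, rfl, hfy⟩, rfl, hF⟩ |
    ⟨y, hy, hyt, rfl, hF⟩ | ⟨y, x, hy, hx, ⟨hny, hfy, rfl, hfx⟩, rfl, hF⟩ <;>
    rw [hF] at hq
  · have := emb₁_cases m₁ m₂ n x; have := emb₁_cases m₁ m₂ n (f₁ x)
    exact .inl ⟨x, by omega, by rw [if_neg (by omega)]⟩
  · have := emb₁_cases m₁ m₂ n x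
    by_cases hV : f₁ x < j ∨ 2 * n + m₁ - j ≤ f₁ x
    · refine .inr ⟨2 * n + m₁ - 1 - f₁ x, by omega, ?_⟩
      rw [if_pos (by omega), show 2 * n + m₁ - 1 - (2 * n + m₁ - 1 - f₁ x) = f₁ x by omega,
        G.nc₁.apply_apply hx]
    · exact .inl ⟨x, by omega, by rw [if_neg (by omega)]⟩
  · exact .inr ⟨y, by omega, by rw [if_neg (by omega)]⟩
  · have := emb₁_cases m₁ m₂ n (f₁ (2 * n + m₁ - 1 - f₂ y))
    by_cases hV : f₂ y < j ∨ 2 * n + m₂ - j ≤ f₂ y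
    · refine .inl ⟨2 * n + m₁ - 1 - f₂ y, by omega, ?_⟩
      rw [if_pos (by omega), show 2 * n + m₁ - 1 - (2 * n + m₁ - 1 - f₂ y) = f₂ y by omega,
        G.nc₂.apply_apply hy]
    · exact .inr ⟨y, by omega, by rw [if_neg (by omega)]⟩

end IsVComp

theorem vertical_composition_general (m₁ m₂ n : ℕ)
    (f₁ f₂ F : ℕ → ℕ)
    (hC₁ : IsNCMatching (2 * (m₁ + n)) f₁)
    (hC₂ : IsNCMatching (2 * (m₂ + n)) f₂)
    (hbot : ∀ p, n + m₁ ≤ p → p < 2 * n + m₁ → ¬ (n + m₁ ≤ f₁ p ∧ f₁ p < 2 * n + m₁))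
    (htop : ∀ p, p < n → ¬ f₂ p < n)
    (hF₁ : ∀ p, p < 2 * (m₁ + n) → (p < n + m₁ ∨ 2 * n + m₁ ≤ p) →
      F (emb₁ m₁ m₂ n p) =
        if n + m₁ ≤ f₁ p ∧ f₁ p < 2 * n + m₁
        then f₂ (2 * n + m₁ - 1 - f₁ p) + m₁
        else emb₁ m₁ m₂ n (f₁ p))
    (hF₂ : ∀ p, p < 2 * (m₂ + n) → n ≤ p →
      F (p + m₁) =
        if f₂ p < n
        then emb₁ m₁ m₂ n (f₁ (2 * n + m₁ - 1 - f₂ p))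
        else f₂ p + m₁) :
    IsNCMatching (2 * ((m₁ + m₂) + n)) F ∧
    (∀ j, 1 ≤ j → j ≤ n - 1 →
      lineCross (2 * ((m₁ + m₂) + n)) (vSide (m₁ + m₂) n j) F ≤ dv m₁ n f₁ + dv m₂ n f₂) ∧
    dv m₁ n f₁ + dv m₂ n f₂ ≤ m₁ + m₂ ∧
    (∀ i, 1 ≤ i → i ≤ m₁ - 1 →
      lineCross (2 * ((m₁ + m₂) + n)) (hSide (m₁ + m₂) n i) F
        = lineCross (2 * (m₁ + n)) (hSide m₁ n i) f₁) ∧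
    (∀ i, 1 ≤ i → i ≤ m₂ - 1 →
      lineCross (2 * ((m₁ + m₂) + n)) (hSide (m₁ + m₂) n (m₁ + i)) F
        = lineCross (2 * (m₂ + n)) (hSide m₂ n i) f₂) := by
  have G : IsVComp m₁ m₂ n f₁ f₂ F := ⟨hC₁, hC₂, hbot, htop, hF₁, hF₂⟩
  refine ⟨G.isNCMatching, fun j hj₁ hj₂ => ?_,
    add_le_add (dv_le_of_bot hC₁ hbot) (dv_le_of_top hC₂ htop),
    fun i _ hi => G.lineCross_hSide_upper (by omega),
    fun i _ hi => G.lineCross_hSide_lower (by omega)⟩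
  exact (G.lineCross_vSide_le (by omega)).trans
    (add_le_add (lineCross_vSide_le_dv f₁ hj₁ hj₂) (lineCross_vSide_le_dv f₂ hj₁ hj₂))

/-- Vertical composition `C₁ ∗_v C₂`: gluing a matching `C₁` of the `m₁ × n`
rectangle with no returns on its bottom side atop a matching `C₂` of the
`m₂ × n` rectangle with no returns on its top side yields a noncrossing matching
`F` of the boundary of the `(m₁+m₂) × n` rectangle; every vertical separating
line of `F` is crossed at most `d^v(C₁) + d^v(C₂) ≤ m₁ + m₂` times, while every
horizontal separating line lying within the `C₁` (resp. `C₂`) part is crossed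
the same number of times as in `C₁` (resp. `C₂`).

The gluing is described by the hypotheses `hF₁`, `hF₂`: the non-bottom points of
`C₁` embed via `emb₁` and the non-top points of `C₂` embed via `p ↦ p + m₁`; an
arc of `C₁` ending at a bottom point `b` (the `k`-th from the left, where
`k = 2n + m₁ - 1 - b`) is continued by the arc of `C₂` starting at its `k`-th
top point, and vice versa. -/
theorem vertical_composition (m₁ m₂ n : ℕ) (hm₁ : 1 ≤ m₁) (hm₂ : 1 ≤ m₂) (hn : 1 ≤ n)
    (f₁ f₂ F : ℕ → ℕ)
    (hC₁ : IsNCMatching (2 * (m₁ + n)) f₁)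
    (hC₂ : IsNCMatching (2 * (m₂ + n)) f₂)
    (hbot : ∀ p, n + m₁ ≤ p → p < 2 * n + m₁ → ¬ (n + m₁ ≤ f₁ p ∧ f₁ p < 2 * n + m₁))
    (htop : ∀ p, p < n → ¬ f₂ p < n)
    (hF₁ : ∀ p, p < 2 * (m₁ + n) → (p < n + m₁ ∨ 2 * n + m₁ ≤ p) →
      F (emb₁ m₁ m₂ n p) =
        if n + m₁ ≤ f₁ p ∧ f₁ p < 2 * n + m₁
        then f₂ (2 * n + m₁ - 1 - f₁ p) + m₁
        else emb₁ m₁ m₂ n (f₁ p))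
    (hF₂ : ∀ p, p < 2 * (m₂ + n) → n ≤ p →
      F (p + m₁) =
        if f₂ p < n
        then emb₁ m₁ m₂ n (f₁ (2 * n + m₁ - 1 - f₂ p))
        else f₂ p + m₁) :
    IsNCMatching (2 * ((m₁ + m₂) + n)) F ∧
    (∀ j, 1 ≤ j → j ≤ n - 1 →
      lineCross (2 * ((m₁ + m₂) + n)) (vSide (m₁ + m₂) n j) F ≤ dv m₁ n f₁ + dv m₂ n f₂) ∧
    dv m₁ n f₁ + dv m₂ n f₂ ≤ m₁ + m₂ ∧
    (∀ i, 1 ≤ i → i ≤ m₁ - 1 →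
      lineCross (2 * ((m₁ + m₂) + n)) (hSide (m₁ + m₂) n i) F
        = lineCross (2 * (m₁ + n)) (hSide m₁ n i) f₁) ∧
    (∀ i, 1 ≤ i → i ≤ m₂ - 1 →
      lineCross (2 * ((m₁ + m₂) + n)) (hSide (m₁ + m₂) n (m₁ + i)) F
        = lineCross (2 * (m₂ + n)) (hSide m₂ n i) f₂) :=
  vertical_composition_general m₁ m₂ n f₁ f₂ F hC₁ hC₂ hbot htop hF₁ hF₂
end

section
/- Let C be a noncrossing perfect matching of the 2(m+n) boundary points of an m×n rectangle (n points on top and bottom, m on left and right) such that no arc of C has both endpoints on the top side. Then every vertical separating line meets C at most m times. -/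
open Finset

section Involution

variable {P : ℕ} {f : ℕ → ℕ}

theorem lineCross_not (hmaps : ∀ p, p < P → f p < P) (hinv : ∀ p, p < P → f (f p) = p)
    (S : ℕ → Prop) [DecidablePred S] :
    lineCross P S f = lineCross P (fun p => ¬ S p) f := by
  unfold lineCross
  refine card_nbij' f f (fun p hp => ?_) (fun p hp => ?_) (fun p hp => ?_) (fun p hp => ?_) <;>
    simp only [coe_filter, mem_range, Set.mem_ofPred_eq, not_not] at hp ⊢
  · exact ⟨hmaps p hp.1, hp.2.2, (hinv p hp.1).symm ▸ hp.2.1⟩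
  · exact ⟨hmaps p hp.1, hp.2.2, (hinv p hp.1).symm ▸ hp.2.1⟩
  · exact hinv p hp.1
  · exact hinv p hp.1

theorem lineCross_add_two_mul_card_le (hmaps : ∀ p, p < P → f p < P)
    (hinv : ∀ p, p < P → f (f p) = p) {S : ℕ → Prop} [DecidablePred S] {A : Finset ℕ}
    (hA : ∀ a ∈ A, a < P ∧ S a ∧ S (f a)) (hdisj : ∀ a ∈ A, f a ∉ A) :
    lineCross P S f + 2 * #A ≤ #((range P).filter S) := by
  have hinj : Set.InjOn f A := fun a ha b hb hab => by
    rw [← hinv a (hA a ha).1, hab, hinv b (hA b hb).1]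
  have hinternal : Disjoint A (A.image f) :=
    disjoint_left.2 fun a ha hfa => by
      obtain ⟨b, hb, rfl⟩ := mem_image.1 hfa
      exact hdisj b hb ha
  have hcross : Disjoint ((range P).filter fun p => S p ∧ ¬ S (f p)) (A ∪ A.image f) := by
    refine disjoint_left.2 fun p hp hpA => ?_
    obtain ⟨-, -, hfp⟩ := mem_filter.1 hp
    rcases mem_union.1 hpA with hpA | hpA
    · exact hfp (hA p hpA).2.2
    · obtain ⟨a, ha, rfl⟩ := mem_image.1 hpA
      exact hfp (by rw [hinv a (hA a ha).1]; exact (hA a ha).2.1)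
  have hsub : (range P).filter (fun p => S p ∧ ¬ S (f p)) ∪ (A ∪ A.image f) ⊆
      (range P).filter S := by
    intro p hp
    simp only [mem_union, mem_filter, mem_range, mem_image] at hp ⊢
    rcases hp with ⟨hpP, hpS, -⟩ | hpA | ⟨a, ha, rfl⟩
    · exact ⟨hpP, hpS⟩
    · exact ⟨(hA p hpA).1, (hA p hpA).2.1⟩
    · exact ⟨hmaps a (hA a ha).1, (hA a ha).2.2⟩
  calc lineCross P S f + 2 * #A
      = #((range P).filter fun p => S p ∧ ¬ S (f p)) + #(A ∪ A.image f) := by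
        rw [card_union_of_disjoint hinternal, card_image_of_injOn hinj, two_mul]; rfl
    _ ≤ #((range P).filter S) := by
        rw [← card_union_of_disjoint hcross]
        exact card_le_card hsub

end Involution

theorem IsNCMatching.apply_lt_of_nested {P : ℕ} {f : ℕ → ℕ} (hf : IsNCMatching P f)
    {p q : ℕ} (hp : p < P) (hq : q < P) (hpq : p < q) (hqp : q < f p) : f q < f p := by
  obtain ⟨-, hinv, -, hnc⟩ := hf
  have hne : f q ≠ f p := fun h => by
    have := hinv q hq
    rw [h, hinv p hp] at this
    omega
  have := hnc p q hp hq
  omega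

theorem range_filter_not_lt_or_le (m n j : ℕ) :
    (range (2 * (m + n))).filter (fun p => ¬ (p < j ∨ 2 * n + m - j ≤ p)) =
      Ico j (2 * n + m - j) := by
  ext p
  simp only [mem_filter, mem_range, mem_Ico]
  omega

/-- Boundary points of an `m × n` rectangle, in circular order: `n` top points
`0..n-1` (left to right), `m` right points `n..n+m-1` (top to bottom), `n` bottom
points `n+m..2n+m-1` (right to left), `m` left points `2n+m..2n+2m-1` (bottom to
top). The `j`-th vertical line has on its left exactly the points `p` with
`p < j ∨ 2n+m-j ≤ p`. -/
theorem vertical_lines_bounded_of_no_top_returns (m n : ℕ) (f : ℕ → ℕ)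
    (hC : IsNCMatching (2 * (m + n)) f)
    (htop : ∀ p, p < n → ¬ f p < n) :
    ∀ j, 1 ≤ j → j ≤ n - 1 →
      lineCross (2 * (m + n)) (fun p => p < j ∨ 2 * n + m - j ≤ p) f ≤ m := by
  intro j _ hjn
  obtain ⟨hmaps, hinv, -, -⟩ := id hC
  have hright := range_filter_not_lt_or_le m n j
  have hsides := card_filter_add_card_filter_not (s := range (2 * (m + n)))
    (fun p => p < j ∨ 2 * n + m - j ≤ p)
  rw [hright, card_range, Nat.card_Ico] at hsides
  by_cases hreturn : ∃ q, j ≤ q ∧ q < n ∧ 2 * n + m - j ≤ f q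
  · obtain ⟨q, hjq, hqn, hfq⟩ := hreturn
    have hnested : ∀ a < j, 2 * n + m - j ≤ f a := fun a ha => by
      have hfa := htop a (by omega)
      have := hC.apply_lt_of_nested (p := a) (q := q) (by omega) (by omega) (by omega) (by omega)
      omega
    have := lineCross_add_two_mul_card_le hmaps hinv
      (S := fun p => p < j ∨ 2 * n + m - j ≤ p) (A := range j)
      (fun a ha => ⟨by simp at ha; omega, Or.inl (mem_range.1 ha),
        Or.inr (hnested a (mem_range.1 ha))⟩)
      (fun a ha ha' => htop a (by simp at ha; omega) (by simp at ha'; omega))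
    rw [card_range] at this
    omega
  · push Not at hreturn
    have := lineCross_add_two_mul_card_le hmaps hinv
      (S := fun p => ¬ (p < j ∨ 2 * n + m - j ≤ p)) (A := Ico j n)
      (fun a ha => by
        obtain ⟨hja, han⟩ := mem_Ico.1 ha
        have := htop a han
        have := hreturn a hja han
        exact ⟨by omega, by omega, by omega⟩)
      (fun a ha ha' => htop a (mem_Ico.1 ha).2 (mem_Ico.1 ha').2)
    rw [← lineCross_not hmaps hinv, hright, Nat.card_Ico, Nat.card_Ico] at this
    omega
end
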